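/- arXiv:2103.05426 — 3 statements merged into one kernel-verified Lean document; each statement's English description precedes it below -/
import Mathlib

section
/- Let N: ℝ^n → ℝ^n have components N(x)_i = x^T Q_i x with Q_i symmetric. If E is symmetric positive definite and x^T E x ≤ α², then for each i, (N(x)_i)² ≤ α² · x^T (Q_i E⁻¹ Q_i) x; equivalently, the pair (x, z) with z = N(x) satisfies the quadratic constraint x^T (α² Q_i E⁻¹ Q_i) x − z^T e_i e_i^T z ≥ 0. -/
/-!
Writing `N(x)_i = xᵀ (Q_i x)` and inserting `E E⁻¹`, Cauchy–Schwarz for the inner product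
induced by `E` gives `(xᵀ y)² ≤ (xᵀ E x)(yᵀ E⁻¹ y)` with `y = Q_i x`; by symmetry of `Q_i`,
`yᵀ E⁻¹ y = xᵀ (Q_i E⁻¹ Q_i) x`, and `xᵀ E x ≤ α²` finishes.
-/

open Matrix

namespace Matrix

variable {ι : Type*} [Fintype ι]

theorem PosSemidef.dotProduct_mulVec_sq_le {M : Matrix ι ι ℝ} (hM : M.PosSemidef) (x y : ι → ℝ) :
    (x ⬝ᵥ (M *ᵥ y)) ^ 2 ≤ (x ⬝ᵥ (M *ᵥ x)) * (y ⬝ᵥ (M *ᵥ y)) := by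
  let := M.toSeminormedAddCommGroup hM
  let := M.toInnerProductSpace hM
  have h : ∀ u v : ι → ℝ, (inner ℝ u v : ℝ) = u ⬝ᵥ (M *ᵥ v) := fun u v =>
    dotProduct_comm (M *ᵥ v) u
  simpa only [sq, h] using real_inner_mul_inner_self_le x y

theorem PosDef.dotProduct_sq_le_mul_inv [DecidableEq ι] {E : Matrix ι ι ℝ} (hE : E.PosDef)
    (x y : ι → ℝ) : (x ⬝ᵥ y) ^ 2 ≤ (x ⬝ᵥ (E *ᵥ x)) * (y ⬝ᵥ (E⁻¹ *ᵥ y)) := by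
  have hEy : E *ᵥ (E⁻¹ *ᵥ y) = y := by
    rw [mulVec_mulVec, mul_nonsing_inv E (isUnit_iff_ne_zero.mpr hE.det_pos.ne'), one_mulVec]
  simpa only [hEy, dotProduct_comm (E⁻¹ *ᵥ y) y] using
    hE.posSemidef.dotProduct_mulVec_sq_le x (E⁻¹ *ᵥ y)

theorem IsSymm.dotProduct_mul_mul_mulVec {R : Type*} [CommSemiring R] {Q : Matrix ι ι R}
    (hQ : Q.IsSymm) (M : Matrix ι ι R) (x : ι → R) : x ⬝ᵥ ((Q * M * Q) *ᵥ x) = (Q *ᵥ x) ⬝ᵥ (M *ᵥ (Q *ᵥ x)) := by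
  rw [← mulVec_mulVec, ← mulVec_mulVec, dotProduct_mulVec, ← mulVec_transpose, hQ.eq]

theorem dotProduct_vecMulVec_single_mulVec {R : Type*} [CommSemiring R] [DecidableEq ι]
    (z : ι → R) (i : ι) :
    z ⬝ᵥ (vecMulVec (Pi.single i 1) (Pi.single i 1) *ᵥ z) = z i ^ 2 := by
  rw [vecMulVec_mulVec, dotProduct_smul, single_one_dotProduct, dotProduct_single_one,
    op_smul_eq_mul, sq]

end Matrix

theorem local_qc_componentwise_general {n : ℕ} (Q : Fin n → Matrix (Fin n) (Fin n) ℝ)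
    (hQ : ∀ i, (Q i).IsSymm) (E : Matrix (Fin n) (Fin n) ℝ) (hE : E.PosDef)
    (α : ℝ)
    (N : (Fin n → ℝ) → (Fin n → ℝ))
    (hN : ∀ x i, N x i = x ⬝ᵥ ((Q i) *ᵥ x))
    (x : Fin n → ℝ) (hx : x ⬝ᵥ (E *ᵥ x) ≤ α ^ 2) :
    ∀ i, (N x i) ^ 2 ≤ α ^ 2 * (x ⬝ᵥ ((Q i * E⁻¹ * Q i) *ᵥ x)) ∧
      0 ≤ x ⬝ᵥ ((α ^ 2 • (Q i * E⁻¹ * Q i)) *ᵥ x) -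
          (N x) ⬝ᵥ ((vecMulVec (Pi.single i 1) (Pi.single i 1)) *ᵥ (N x)) := by
  intro i
  have hbound : (N x i) ^ 2 ≤ α ^ 2 * (x ⬝ᵥ ((Q i * E⁻¹ * Q i) *ᵥ x)) := by
    have hnonneg : 0 ≤ (Q i *ᵥ x) ⬝ᵥ (E⁻¹ *ᵥ (Q i *ᵥ x)) := by
      simpa using hE.inv.posSemidef.dotProduct_mulVec_nonneg (Q i *ᵥ x)
    calc (N x i) ^ 2
        ≤ (x ⬝ᵥ (E *ᵥ x)) * ((Q i *ᵥ x) ⬝ᵥ (E⁻¹ *ᵥ (Q i *ᵥ x))) := by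
          rw [hN]; exact hE.dotProduct_sq_le_mul_inv x (Q i *ᵥ x)
      _ ≤ α ^ 2 * (x ⬝ᵥ ((Q i * E⁻¹ * Q i) *ᵥ x)) := by
          rw [(hQ i).dotProduct_mul_mul_mulVec]; gcongr
  refine ⟨hbound, ?_⟩
  rw [dotProduct_vecMulVec_single_mulVec, smul_mulVec, dotProduct_smul, smul_eq_mul]
  linarith

theorem local_qc_componentwise {n : ℕ} (Q : Fin n → Matrix (Fin n) (Fin n) ℝ)
    (hQ : ∀ i, (Q i).IsSymm) (E : Matrix (Fin n) (Fin n) ℝ) (hE : E.PosDef)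
    (α : ℝ) (hα : 0 < α)
    (N : (Fin n → ℝ) → (Fin n → ℝ))
    (hN : ∀ x i, N x i = x ⬝ᵥ ((Q i) *ᵥ x))
    (x : Fin n → ℝ) (hx : x ⬝ᵥ (E *ᵥ x) ≤ α ^ 2) :
    ∀ i, (N x i) ^ 2 ≤ α ^ 2 * (x ⬝ᵥ ((Q i * E⁻¹ * Q i) *ᵥ x)) ∧
      0 ≤ x ⬝ᵥ ((α ^ 2 • (Q i * E⁻¹ * Q i)) *ᵥ x) -
          (N x) ⬝ᵥ ((vecMulVec (Pi.single i 1) (Pi.single i 1)) *ᵥ (N x)) :=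
  local_qc_componentwise_general Q hQ E hE α N hN x hx
end

section
/- Suppose the matrix inequality [A^T P + P A, P; P, 0] + ξ₀ M₀ + ∑_{i=1}^n ξ_i M_i(α,E) ⪯ [−εI, 0; 0, 0] holds, where M₀ = [0, I; I, 0] and M_i(α,E) = [α² Q_i E⁻¹ Q_i, 0; 0, −e_i e_i^T], with ξ_i ≥ 0 for i = 1,…,n and ε > 0. Then for every x with x^T E x ≤ α² and z = N(x) (where N(x)_i = x^T Q_i x and N is lossless), one has 2 x^T P (A x + z) ≤ −ε ‖x‖². -/
/-!
Evaluate the quadratic form of the LMI at `(x, z)` with `z = N x`. The `M₀` term is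
`2 xᵀz = 0` by losslessness, and every `Mᵢ` term `α² (Qᵢx)ᵀE⁻¹(Qᵢx) - zᵢ²` is nonnegative on
the ellipsoid `xᵀEx ≤ α²`, by Cauchy–Schwarz for the pairing of the `E`- and `E⁻¹`-inner
products: `(xᵀQᵢx)² ≤ (xᵀEx) (Qᵢx)ᵀE⁻¹(Qᵢx)`. Since the multipliers `ξᵢ` are nonnegative,
what is left of the LMI is `xᵀ(AᵀP + PA)x + 2 xᵀPz ≤ -ε ‖x‖²`.
-/

open Matrix

namespace Matrix

variable {m n : Type*} [Fintype m] [Fintype n]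

theorem IsSymm.dotProduct_mulVec_comm {R : Type*} [CommSemiring R] {P : Matrix n n R}
    (hP : P.IsSymm) (x y : n → R) : x ⬝ᵥ P *ᵥ y = y ⬝ᵥ P *ᵥ x := by
  rw [dotProduct_mulVec, ← mulVec_transpose, hP.eq, dotProduct_comm]

theorem sumElim_dotProduct_fromBlocks_mulVec_sumElim {R : Type*} [CommSemiring R]
    (A : Matrix m m R) (B : Matrix m n R) (C : Matrix n m R) (D : Matrix n n R)
    (x : m → R) (y : n → R) :
    Sum.elim x y ⬝ᵥ fromBlocks A B C D *ᵥ Sum.elim x y =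
      x ⬝ᵥ A *ᵥ x + x ⬝ᵥ B *ᵥ y + y ⬝ᵥ C *ᵥ x + y ⬝ᵥ D *ᵥ y := by
  simp only [fromBlocks_mulVec, Sum.elim_comp_inl, Sum.elim_comp_inr,
    sumElim_dotProduct_sumElim, dotProduct_add]
  ring

theorem PosSemidef.dotProduct_mulVec_le_of_multipliers {R : Type*} [CommRing R] [PartialOrder R]
    [IsOrderedRing R] [StarRing R] [TrivialStar R] {ι : Type*} [Fintype ι]
    {D F M₀ : Matrix m m R} {M : ι → Matrix m m R} {ξ₀ : R} {ξ : ι → R}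
    (h : (D - (F + ξ₀ • M₀ + ∑ i, ξ i • M i)).PosSemidef) (hξ : ∀ i, 0 ≤ ξ i) {v : m → R}
    (hM₀ : v ⬝ᵥ M₀ *ᵥ v = 0) (hM : ∀ i, 0 ≤ v ⬝ᵥ M i *ᵥ v) :
    v ⬝ᵥ F *ᵥ v ≤ v ⬝ᵥ D *ᵥ v := by
  have hv := h.dotProduct_mulVec_nonneg v
  simp only [star_trivial, sub_mulVec, add_mulVec, sum_mulVec, smul_mulVec, dotProduct_sub,
    dotProduct_add, dotProduct_sum, dotProduct_smul, smul_eq_mul, hM₀, mul_zero, add_zero,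
    sub_nonneg] at hv
  exact le_trans (le_add_of_nonneg_right
    (Finset.sum_nonneg fun i _ => mul_nonneg (hξ i) (hM i))) hv

section Field

variable {K : Type*} [Field K] [LinearOrder K] [IsStrictOrderedRing K] [StarRing K]
  [TrivialStar K] [DecidableEq n] {E : Matrix n n K}

theorem PosDef.sq_dotProduct_le (hE : E.PosDef) (x y : n → K) :
    (x ⬝ᵥ y) ^ 2 ≤ (x ⬝ᵥ E *ᵥ x) * (y ⬝ᵥ E⁻¹ *ᵥ y) := by
  have hE_symm : E.IsSymm :=
    (conjTranspose_eq_transpose_of_trivial E).symm.trans hE.isHermitian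
  have hEE : E *ᵥ (E⁻¹ *ᵥ y) = y := by
    rw [mulVec_mulVec, mul_nonsing_inv _ ((isUnit_iff_isUnit_det E).1 hE.isUnit), one_mulVec]
  -- the value of the `E`-form at `t • x - E⁻¹ *ᵥ y`
  have hquad : ∀ t : K,
      0 ≤ (x ⬝ᵥ E *ᵥ x) * (t * t) + -(2 * (x ⬝ᵥ y)) * t + y ⬝ᵥ E⁻¹ *ᵥ y := fun t => by
    have h := hE.posSemidef.dotProduct_mulVec_nonneg (t • x - E⁻¹ *ᵥ y)
    rw [star_trivial, mulVec_sub, mulVec_smul, hEE, dotProduct_sub, sub_dotProduct,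
      sub_dotProduct, smul_dotProduct, smul_dotProduct, dotProduct_smul, dotProduct_smul,
      hE_symm.dotProduct_mulVec_comm (E⁻¹ *ᵥ y), hEE, dotProduct_comm (E⁻¹ *ᵥ y)] at h
    simp only [smul_eq_mul] at h
    linear_combination h
  have hdiscrim := discrim_le_zero hquad
  rw [discrim] at hdiscrim
  linarith

theorem PosDef.sq_dotProduct_mulVec_le_of_le {Q : Matrix n n K} {c : K} (hE : E.PosDef)
    (hQ : Q.IsSymm) {x : n → K} (hx : x ⬝ᵥ E *ᵥ x ≤ c) :
    (x ⬝ᵥ Q *ᵥ x) ^ 2 ≤ c * (x ⬝ᵥ (Q * E⁻¹ * Q) *ᵥ x) := by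
  have hQEQ : x ⬝ᵥ (Q * E⁻¹ * Q) *ᵥ x = Q *ᵥ x ⬝ᵥ E⁻¹ *ᵥ Q *ᵥ x := by
    rw [← mulVec_mulVec, ← mulVec_mulVec, dotProduct_mulVec, ← mulVec_transpose, hQ.eq]
  have hQEQ_nonneg : 0 ≤ Q *ᵥ x ⬝ᵥ E⁻¹ *ᵥ Q *ᵥ x := by
    simpa only [star_trivial] using hE.inv.posSemidef.dotProduct_mulVec_nonneg (Q *ᵥ x)
  rw [hQEQ]
  exact (hE.sq_dotProduct_le x (Q *ᵥ x)).trans (mul_le_mul_of_nonneg_right hx hQEQ_nonneg)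

end Field

end Matrix

theorem lmi_implies_lyapunov_decrease_general {n : ℕ}
    (A P E : Matrix (Fin n) (Fin n) ℝ) (hP : P.IsSymm) (hE : E.PosDef)
    (Q : Fin n → Matrix (Fin n) (Fin n) ℝ) (hQ : ∀ i, (Q i).IsSymm)
    (N : (Fin n → ℝ) → (Fin n → ℝ))
    (hN : ∀ x i, N x i = x ⬝ᵥ ((Q i) *ᵥ x))
    (hlossless : ∀ x : Fin n → ℝ, x ⬝ᵥ (N x) = 0)
    (α ε : ℝ)
    (ξ₀ : ℝ) (ξ : Fin n → ℝ) (hξ : ∀ i, 0 ≤ ξ i)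
    (M₀ : Matrix ((Fin n) ⊕ (Fin n)) ((Fin n) ⊕ (Fin n)) ℝ)
    (hM₀ : M₀ = fromBlocks 0 1 1 0)
    (M : Fin n → Matrix ((Fin n) ⊕ (Fin n)) ((Fin n) ⊕ (Fin n)) ℝ)
    (hM : ∀ i, M i = fromBlocks (α ^ 2 • (Q i * E⁻¹ * Q i)) 0 0
        (-(vecMulVec (Pi.single i 1) (Pi.single i 1))))
    (hLMI : (fromBlocks (-(ε • (1 : Matrix (Fin n) (Fin n) ℝ))) 0 0 0 -
        (fromBlocks (Aᵀ * P + P * A) P P 0 + ξ₀ • M₀ + ∑ i, ξ i • M i)).PosSemidef) :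
    ∀ x : Fin n → ℝ, x ⬝ᵥ (E *ᵥ x) ≤ α ^ 2 →
      2 * (x ⬝ᵥ (P *ᵥ (A *ᵥ x + N x))) ≤ -ε * (x ⬝ᵥ x) := by
  intro x hx
  have hM₀v : Sum.elim x (N x) ⬝ᵥ M₀ *ᵥ Sum.elim x (N x) = 0 := by
    simp [hM₀, sumElim_dotProduct_fromBlocks_mulVec_sumElim, dotProduct_comm (N x), hlossless]
  have hMv : ∀ i, 0 ≤ Sum.elim x (N x) ⬝ᵥ M i *ᵥ Sum.elim x (N x) := fun i => by
    have hsector := hE.sq_dotProduct_mulVec_le_of_le (hQ i) hx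
    simp only [hM i, sumElim_dotProduct_fromBlocks_mulVec_sumElim, neg_mulVec, dotProduct_neg,
      vecMulVec_mulVec, op_smul_eq_smul, smul_mulVec, dotProduct_smul, zero_mulVec,
      dotProduct_zero, dotProduct_single, single_dotProduct, smul_eq_mul, hN]
    linarith
  have hS := hLMI.dotProduct_mulVec_le_of_multipliers hξ hM₀v hMv
  simp only [sumElim_dotProduct_fromBlocks_mulVec_sumElim, add_mulVec, ← mulVec_mulVec,
    dotProduct_add, dotProduct_transpose_mulVec, zero_mulVec, dotProduct_zero, add_zero,
    neg_mulVec, dotProduct_neg, smul_mulVec, one_mulVec, dotProduct_smul, smul_eq_mul,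
    hP.dotProduct_mulVec_comm (N x)] at hS
  rw [mulVec_add, dotProduct_add]
  linarith [hP.dotProduct_mulVec_comm x (A *ᵥ x), dotProduct_comm (P *ᵥ x) (A *ᵥ x)]

theorem lmi_implies_lyapunov_decrease {n : ℕ}
    (A P E : Matrix (Fin n) (Fin n) ℝ) (hP : P.IsSymm) (hE : E.PosDef)
    (Q : Fin n → Matrix (Fin n) (Fin n) ℝ) (hQ : ∀ i, (Q i).IsSymm)
    (N : (Fin n → ℝ) → (Fin n → ℝ))
    (hN : ∀ x i, N x i = x ⬝ᵥ ((Q i) *ᵥ x))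
    (hlossless : ∀ x : Fin n → ℝ, x ⬝ᵥ (N x) = 0)
    (α ε : ℝ) (hα : 0 < α) (hε : 0 < ε)
    (ξ₀ : ℝ) (ξ : Fin n → ℝ) (hξ : ∀ i, 0 ≤ ξ i)
    (M₀ : Matrix ((Fin n) ⊕ (Fin n)) ((Fin n) ⊕ (Fin n)) ℝ)
    (hM₀ : M₀ = fromBlocks 0 1 1 0)
    (M : Fin n → Matrix ((Fin n) ⊕ (Fin n)) ((Fin n) ⊕ (Fin n)) ℝ)
    (hM : ∀ i, M i = fromBlocks (α ^ 2 • (Q i * E⁻¹ * Q i)) 0 0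
        (-(vecMulVec (Pi.single i 1) (Pi.single i 1))))
    (hLMI : (fromBlocks (-(ε • (1 : Matrix (Fin n) (Fin n) ℝ))) 0 0 0 -
        (fromBlocks (Aᵀ * P + P * A) P P 0 + ξ₀ • M₀ + ∑ i, ξ i • M i)).PosSemidef) :
    ∀ x : Fin n → ℝ, x ⬝ᵥ (E *ᵥ x) ≤ α ^ 2 →
      2 * (x ⬝ᵥ (P *ᵥ (A *ᵥ x + N x))) ≤ -ε * (x ⬝ᵥ x) :=
  lmi_implies_lyapunov_decrease_general A P E hP hE Q hQ N hN hlossless α ε ξ₀ ξ hξ M₀ hM₀ M hM hLMI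
end

section
/- In the iterative refinement of Algorithm A, if (P⁽¹⁾, ξ⁽¹⁾, R⁽¹⁾) is feasible for the SDP constraints with local region parameters (E, α) = (E⁽¹⁾, α⁽¹⁾), then (P⁽¹⁾, ξ⁽¹⁾, R⁽¹⁾) remains feasible when the local region is updated to (E, α) = (P⁽¹⁾, 1). In particular, the constraint (1/α²)E ⪯ P holds with equality under this update; consequently the optimal radii satisfy R⁽²⁾ ≥ R⁽¹⁾. -/
/-!
The old region constraint `P₁ ⪰ α₁⁻² E₁` forces `P₁ ≻ 0`, and since inversion is operator
antitone it gives `P₁⁻¹ ⪯ α₁² E₁⁻¹`. Conjugating by the symmetric `Qᵢ` yields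
`Mᵢ(1, P₁) ⪯ Mᵢ(α₁, E₁)`, so with `ξᵢ ≥ 0` the LMI only gets weaker when `(E, α)` becomes
`(P₁, 1)`, while the region constraint turns into `P₁ ⪯ P₁`. Hence `R₁` stays feasible and is
bounded by the new optimum.
-/

open Matrix

/-- The SDP feasibility constraints of Theorem 1 (ROA estimation) for local region
parameters `(E, α)` and decision variables `(P, ξ₀, ξ, R)`. -/
def SDPFeasible {n : ℕ} (A : Matrix (Fin n) (Fin n) ℝ)
    (Q : Fin n → Matrix (Fin n) (Fin n) ℝ) (ε : ℝ)
    (E : Matrix (Fin n) (Fin n) ℝ) (α : ℝ)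
    (P : Matrix (Fin n) (Fin n) ℝ) (ξ₀ : ℝ) (ξ : Fin n → ℝ) (R : ℝ) : Prop :=
  P.IsSymm ∧ 0 < R ∧ (∀ i, 0 ≤ ξ i) ∧
  (fromBlocks (-(ε • (1 : Matrix (Fin n) (Fin n) ℝ))) 0 0 0 -
      (fromBlocks (Aᵀ * P + P * A) P P 0 +
        ξ₀ • (fromBlocks 0 1 1 0) +
        ∑ i, ξ i • fromBlocks (α ^ 2 • (Q i * E⁻¹ * Q i)) 0 0
          (-(vecMulVec (Pi.single i 1) (Pi.single i 1))))).PosSemidef ∧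
  (P - (α ^ 2)⁻¹ • E).PosSemidef ∧
  ((R ^ 2)⁻¹ • (1 : Matrix (Fin n) (Fin n) ℝ) - P).PosSemidef

open scoped ComplexOrder

namespace Matrix

variable {m n 𝕜 : Type*} [RCLike 𝕜]

-- Both Schur complements of `fromBlocks B 1 1 A⁻¹` are positive semidefinite exactly when it is.
theorem PosDef.posSemidef_inv_sub_inv [Fintype m] [DecidableEq m] {A B : Matrix m m 𝕜}
    (hA : A.PosDef) (hAB : (B - A).PosSemidef) : (A⁻¹ - B⁻¹).PosSemidef := by
  have hB : B.PosDef := by simpa using hA.add_posSemidef hAB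
  let := hA.isUnit.invertible
  let := hA.inv.isUnit.invertible
  let := hB.isUnit.invertible
  have h₂₂ := PosDef.fromBlocks₂₂ B (1 : Matrix m m 𝕜) hA.inv
  have h₁₁ := PosDef.fromBlocks₁₁ (1 : Matrix m m 𝕜) A⁻¹ hB
  simp only [conjTranspose_one, one_mul, mul_one, inv_inv_of_invertible] at h₂₂ h₁₁
  exact h₁₁.mp (h₂₂.mpr hAB)

theorem PosSemidef.fromBlocks_zero [Fintype m] [DecidableEq m] [Fintype n] {M : Matrix m m 𝕜}
    (hM : M.PosSemidef) : (fromBlocks M 0 0 (0 : Matrix n n 𝕜)).PosSemidef := by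
  have := hM.conjTranspose_mul_mul_same (fromCols (1 : Matrix m m 𝕜) (0 : Matrix m n 𝕜))
  rw [← fromCols_fromRows_eq_fromBlocks, fromRows_zero]
  simpa [conjTranspose_fromCols_eq_fromRows_conjTranspose, fromRows_mul, mul_fromCols] using this

theorem PosSemidef.sub_add_sum_smul_of_posSemidef_sub {ι : Type*} [Fintype ι] {C L : Matrix m m 𝕜}
    {S S' : ι → Matrix m m 𝕜} {ξ : ι → ℝ} (h : (C - (L + ∑ i, ξ i • S i)).PosSemidef)
    (hξ : ∀ i, 0 ≤ ξ i) (hS : ∀ i, (S i - S' i).PosSemidef) :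
    (C - (L + ∑ i, ξ i • S' i)).PosSemidef := by
  have hsplit : C - (L + ∑ i, ξ i • S' i)
      = C - (L + ∑ i, ξ i • S i) + ∑ i, ξ i • (S i - S' i) := by
    simp only [smul_sub, Finset.sum_sub_distrib]
    abel
  rw [hsplit]
  exact h.add (posSemidef_sum _ fun i _ => (hS i).smul (hξ i))

theorem PosDef.posSemidef_smul_inv_sub_inv [Fintype m] [DecidableEq m] {E P : Matrix m m ℝ}
    {c : ℝ} (hE : E.PosDef) (hc : 0 < c) (h : (P - c⁻¹ • E).PosSemidef) :
    (c • E⁻¹ - P⁻¹).PosSemidef := by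
  let := invertibleOfNonzero (inv_ne_zero hc.ne')
  have hcE : (c⁻¹ • E).PosDef := hE.smul (inv_pos.2 hc)
  have := hcE.posSemidef_inv_sub_inv h
  rwa [inv_smul E _ hE.det_pos.ne'.isUnit, invOf_eq_inv, inv_inv] at this

theorem posSemidef_fromBlocks_smul_conj_sub [Fintype m] [DecidableEq m] [Fintype n]
    {Q X Y : Matrix m m ℝ} (hQ : Q.IsSymm) {a b : ℝ} (N : Matrix n n ℝ)
    (h : (a • X - b • Y).PosSemidef) :
    (fromBlocks (a • (Q * X * Q)) 0 0 N - fromBlocks (b • (Q * Y * Q)) 0 0 N).PosSemidef := by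
  have hconj := h.conjTranspose_mul_mul_same Q
  rw [conjTranspose_eq_transpose_of_trivial, hQ.eq] at hconj
  have hblocks : fromBlocks (a • (Q * X * Q)) 0 0 N - fromBlocks (b • (Q * Y * Q)) 0 0 N
      = fromBlocks (Q * (a • X - b • Y) * Q) 0 0 0 := by
    ext (i | i) (j | j) <;> simp [Matrix.mul_sub, Matrix.sub_mul]
  rw [hblocks]
  exact hconj.fromBlocks_zero

end Matrix

theorem refinement_feasibility_and_monotonicity_general {n : ℕ}
    (A : Matrix (Fin n) (Fin n) ℝ)
    (Q : Fin n → Matrix (Fin n) (Fin n) ℝ) (hQ : ∀ i, (Q i).IsSymm) (ε : ℝ)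
    (E₁ : Matrix (Fin n) (Fin n) ℝ) (hE₁ : E₁.PosDef) (α₁ : ℝ) (hα₁ : 0 < α₁)
    (P₁ : Matrix (Fin n) (Fin n) ℝ)
    (ξ₀ : ℝ) (ξ : Fin n → ℝ) (R₁ : ℝ)
    (hfeas : SDPFeasible A Q ε E₁ α₁ P₁ ξ₀ ξ R₁) :
    SDPFeasible A Q ε P₁ 1 P₁ ξ₀ ξ R₁ ∧
    P₁ - ((1 : ℝ) ^ 2)⁻¹ • P₁ = 0 ∧
    (∀ R₂ : ℝ,
      IsGreatest {R : ℝ | ∃ P ξ₀' ξ', SDPFeasible A Q ε P₁ 1 P ξ₀' ξ' R} R₂ →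
      R₁ ≤ R₂) := by
  obtain ⟨hsym, hR, hξ, hLMI, hregion, hball⟩ := hfeas
  have hinv : (α₁ ^ 2 • E₁⁻¹ - (1 : ℝ) ^ 2 • P₁⁻¹).PosSemidef := by
    simpa using hE₁.posSemidef_smul_inv_sub_inv (by positivity) hregion
  have hregion₂ : P₁ - ((1 : ℝ) ^ 2)⁻¹ • P₁ = 0 := by simp
  have hfeas₂ : SDPFeasible A Q ε P₁ 1 P₁ ξ₀ ξ R₁ :=
    ⟨hsym, hR, hξ, hLMI.sub_add_sum_smul_of_posSemidef_sub hξ fun i =>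
      posSemidef_fromBlocks_smul_conj_sub (hQ i) _ hinv, hregion₂ ▸ PosSemidef.zero, hball⟩
  exact ⟨hfeas₂, hregion₂, fun R₂ hR₂ => hR₂.2 ⟨P₁, ξ₀, ξ, hfeas₂⟩⟩

theorem refinement_feasibility_and_monotonicity {n : ℕ}
    (A : Matrix (Fin n) (Fin n) ℝ)
    (Q : Fin n → Matrix (Fin n) (Fin n) ℝ) (hQ : ∀ i, (Q i).IsSymm) (ε : ℝ) (hε : 0 < ε)
    (E₁ : Matrix (Fin n) (Fin n) ℝ) (hE₁ : E₁.PosDef) (α₁ : ℝ) (hα₁ : 0 < α₁)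
    (P₁ : Matrix (Fin n) (Fin n) ℝ) (hP₁ : P₁.PosDef)
    (ξ₀ : ℝ) (ξ : Fin n → ℝ) (R₁ : ℝ)
    (hfeas : SDPFeasible A Q ε E₁ α₁ P₁ ξ₀ ξ R₁) :
    SDPFeasible A Q ε P₁ 1 P₁ ξ₀ ξ R₁ ∧
    P₁ - ((1 : ℝ) ^ 2)⁻¹ • P₁ = 0 ∧
    (∀ R₂ : ℝ,
      IsGreatest {R : ℝ | ∃ P ξ₀' ξ', SDPFeasible A Q ε P₁ 1 P ξ₀' ξ' R} R₂ →
      R₁ ≤ R₂) :=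
  refinement_feasibility_and_monotonicity_general A Q hQ ε E₁ hE₁ α₁ hα₁ P₁ ξ₀ ξ R₁ hfeas
end
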